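/- arXiv:1408.1693 — 5 statements merged into one kernel-verified Lean document; each statement's English description precedes it below -/
import Mathlib

section
/- Let D be a real symmetric positive definite n×n matrix, let H be an n×n real matrix, and let ρ ∈ (0, 1/2] and ν > 0 satisfy ‖H‖_D ≤ (1−ρ)² and ν ≤ ρ/2. Let (x⁽ᵏ⁾)_{k≥0} be a sequence in ℝⁿ with ‖x⁽ᵏ⁺¹⁾ − H·x⁽ᵏ⁾‖_D ≤ ν·‖H·x⁽ᵏ⁾‖_D for all k ≥ 0. Then Σ_{k=0}^∞ ‖x⁽ᵏ⁾ − H^k·x⁽⁰⁾‖_D ≤ 4·ρ^{−2}·ν·‖x⁽⁰⁾‖_D. -/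
open Matrix

/-- The `D`-norm `‖x‖_D = √(xᵀ D x)` on `ℝⁿ`. -/
noncomputable def vecBNorm {n : ℕ} (D : Matrix (Fin n) (Fin n) ℝ) (x : Fin n → ℝ) : ℝ :=
  Real.sqrt (x ⬝ᵥ D.mulVec x)

/-- The operator norm induced by the `D`-norm: `‖M‖_D = max_{x ≠ 0} ‖Mx‖_D / ‖x‖_D`. -/
noncomputable def matBNorm {n : ℕ} (D M : Matrix (Fin n) (Fin n) ℝ) : ℝ :=
  ⨆ x : {x : Fin n → ℝ // x ≠ 0}, vecBNorm D (M.mulVec x.1) / vecBNorm D x.1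

/-! With `q = ‖H‖_D` and `eₖ = ‖x⁽ᵏ⁾ - Hᵏ x⁽⁰⁾‖_D`, splitting
`x⁽ᵏ⁺¹⁾ - Hᵏ⁺¹ x⁽⁰⁾ = (x⁽ᵏ⁺¹⁾ - H x⁽ᵏ⁾) + H (x⁽ᵏ⁾ - Hᵏ x⁽⁰⁾)` and using
`‖x⁽ᵏ⁾‖_D ≤ eₖ + qᵏ ‖x⁽⁰⁾‖_D` gives `eₖ₊₁ ≤ a eₖ + ν qᵏ⁺¹ ‖x⁽⁰⁾‖_D` with `a = (1 + ν) q`,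
hence `eₖ ≤ ν ‖x⁽⁰⁾‖_D k aᵏ`. Since `ν ≤ ρ / 2` forces `a ≤ 1 - ρ`, summing the
arithmetico-geometric series gives `∑ eₖ ≤ ν ‖x⁽⁰⁾‖_D a / (1 - a)² ≤ ρ⁻² ν ‖x⁽⁰⁾‖_D`.
Only the triangle inequality is used, so the estimate holds for any seminorm; the `D`-norm is
the seminorm `x ↦ ‖√D x‖₂`. -/

section ApproxPowerSeq

variable {𝕜 E : Type*} [SeminormedRing 𝕜] [AddCommGroup E] [Module 𝕜 E]
  {p : Seminorm 𝕜 E} {f : Module.End 𝕜 E} {q ν : ℝ} {x : ℕ → E}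

def IsApproxPowerSeq (p : Seminorm 𝕜 E) (f : Module.End 𝕜 E) (ν : ℝ) (x : ℕ → E) : Prop :=
  ∀ k, p (x (k + 1) - f (x k)) ≤ ν * p (f (x k))

lemma Seminorm.apply_pow_apply_le (hq : 0 ≤ q) (hf : ∀ y, p (f y) ≤ q * p y) (k : ℕ) (y : E) :
    p ((f ^ k) y) ≤ q ^ k * p y := by
  induction k with
  | zero => simp
  | succ k ih =>
    calc p ((f ^ (k + 1)) y) = p (f ((f ^ k) y)) := by rw [pow_succ', Module.End.mul_apply]
      _ ≤ q * (q ^ k * p y) := (hf _).trans (mul_le_mul_of_nonneg_left ih hq)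
      _ = q ^ (k + 1) * p y := by ring

namespace IsApproxPowerSeq

lemma error_succ_le (hx : IsApproxPowerSeq p f ν x) (hq : 0 ≤ q) (hν : 0 ≤ ν)
    (hf : ∀ y, p (f y) ≤ q * p y) (k : ℕ) :
    p (x (k + 1) - (f ^ (k + 1)) (x 0)) ≤
      (1 + ν) * q * p (x k - (f ^ k) (x 0)) + ν * q ^ (k + 1) * p (x 0) := by
  set e := p (x k - (f ^ k) (x 0))
  have hsplit : x (k + 1) - (f ^ (k + 1)) (x 0) =
      (x (k + 1) - f (x k)) + f (x k - (f ^ k) (x 0)) := by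
    rw [pow_succ', Module.End.mul_apply, map_sub]; abel
  have hxk : p (x k) ≤ e + q ^ k * p (x 0) := by
    calc p (x k) = p ((x k - (f ^ k) (x 0)) + (f ^ k) (x 0)) := by rw [sub_add_cancel]
      _ ≤ e + q ^ k * p (x 0) := by
        grw [map_add_le_add, p.apply_pow_apply_le hq hf]
  calc p (x (k + 1) - (f ^ (k + 1)) (x 0))
      ≤ ν * p (f (x k)) + q * e := by
        rw [hsplit]; exact (map_add_le_add p _ _).trans (add_le_add (hx k) (hf _))
    _ ≤ ν * (q * (e + q ^ k * p (x 0))) + q * e := by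
        gcongr; exact (hf _).trans (mul_le_mul_of_nonneg_left hxk hq)
    _ = (1 + ν) * q * e + ν * q ^ (k + 1) * p (x 0) := by ring

lemma error_le (hx : IsApproxPowerSeq p f ν x) (hq : 0 ≤ q) (hν : 0 ≤ ν)
    (hf : ∀ y, p (f y) ≤ q * p y) (k : ℕ) :
    p (x k - (f ^ k) (x 0)) ≤ ν * p (x 0) * (k * ((1 + ν) * q) ^ k) := by
  induction k with
  | zero => simp
  | succ k ih =>
    have hqa : q ^ (k + 1) ≤ ((1 + ν) * q) ^ (k + 1) := by
      gcongr; exact le_mul_of_one_le_left hq (by linarith)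
    calc p (x (k + 1) - (f ^ (k + 1)) (x 0))
        ≤ (1 + ν) * q * p (x k - (f ^ k) (x 0)) + ν * q ^ (k + 1) * p (x 0) :=
          hx.error_succ_le hq hν hf k
      _ ≤ (1 + ν) * q * (ν * p (x 0) * (k * ((1 + ν) * q) ^ k)) +
            ν * ((1 + ν) * q) ^ (k + 1) * p (x 0) := by gcongr
      _ = ν * p (x 0) * ((k + 1 : ℕ) * ((1 + ν) * q) ^ (k + 1)) := by push_cast; ring

lemma summable_error (hx : IsApproxPowerSeq p f ν x) (hq : 0 ≤ q) (hν : 0 ≤ ν)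
    (hf : ∀ y, p (f y) ≤ q * p y) (hlt : (1 + ν) * q < 1) :
    Summable fun k ↦ p (x k - (f ^ k) (x 0)) := by
  have ha : ‖(1 + ν) * q‖ < 1 := by rwa [Real.norm_of_nonneg (by positivity)]
  exact .of_nonneg_of_le (fun _ ↦ apply_nonneg _ _) (hx.error_le hq hν hf)
    ((hasSum_coe_mul_geometric_of_norm_lt_one ha).summable.mul_left _)

lemma tsum_error_le (hx : IsApproxPowerSeq p f ν x) (hq : 0 ≤ q) (hν : 0 ≤ ν)
    (hf : ∀ y, p (f y) ≤ q * p y) (hlt : (1 + ν) * q < 1) :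
    ∑' k, p (x k - (f ^ k) (x 0)) ≤ ν * p (x 0) * ((1 + ν) * q / (1 - (1 + ν) * q) ^ 2) := by
  have ha : ‖(1 + ν) * q‖ < 1 := by rwa [Real.norm_of_nonneg (by positivity)]
  exact hasSum_le (hx.error_le hq hν hf) (hx.summable_error hq hν hf hlt).hasSum
    ((hasSum_coe_mul_geometric_of_norm_lt_one ha).mul_left _)

end IsApproxPowerSeq

end ApproxPowerSeq

section DNorm

open scoped MatrixOrder Matrix.Norms.L2Operator

variable {n : ℕ} {D : Matrix (Fin n) (Fin n) ℝ}

noncomputable def vecBSeminorm (D : Matrix (Fin n) (Fin n) ℝ) : Seminorm ℝ (Fin n → ℝ) :=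
  (normSeminorm ℝ (EuclideanSpace ℝ (Fin n))).comp
    ((WithLp.linearEquiv 2 ℝ (Fin n → ℝ)).symm.toLinearMap ∘ₗ (CFC.sqrt D).mulVecLin)

lemma vecBSeminorm_apply (x : Fin n → ℝ) :
    vecBSeminorm D x = ‖WithLp.toLp 2 (CFC.sqrt D *ᵥ x)‖ := rfl

lemma Matrix.PosSemidef.vecBNorm_eq (hD : D.PosSemidef) (x : Fin n → ℝ) :
    vecBNorm D x = vecBSeminorm D x := by
  set S := CFC.sqrt D
  have hsym : Sᵀ = S := by
    rw [← conjTranspose_eq_transpose_of_trivial]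
    exact (CFC.sqrt_nonneg D).posSemidef.isHermitian
  have hD_eq : x ⬝ᵥ D *ᵥ x = (S *ᵥ x) ⬝ᵥ (S *ᵥ x) := by
    rw [← CFC.sqrt_mul_sqrt_self D hD.nonneg, ← mulVec_mulVec, dotProduct_mulVec,
      ← vecMul_transpose, hsym]
  rw [vecBNorm, hD_eq, vecBSeminorm_apply, EuclideanSpace.norm_eq]
  simp [S, dotProduct, sq]

lemma matBNorm_nonneg (D M : Matrix (Fin n) (Fin n) ℝ) : 0 ≤ matBNorm D M :=
  Real.iSup_nonneg fun _ ↦ div_nonneg (Real.sqrt_nonneg _) (Real.sqrt_nonneg _)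

lemma Matrix.PosDef.vecBNorm_mulVec_le_opNorm (hD : D.PosDef) (M : Matrix (Fin n) (Fin n) ℝ)
    (x : Fin n → ℝ) :
    vecBNorm D (M *ᵥ x) ≤ ‖CFC.sqrt D * M * (CFC.sqrt D)⁻¹‖ * vecBNorm D x := by
  set S := CFC.sqrt D
  have hS : IsUnit S.det := by
    refine isUnit_of_mul_isUnit_left (x := S.det) (y := S.det) ?_
    rw [← det_mul, CFC.sqrt_mul_sqrt_self D hD.posSemidef.nonneg]
    exact hD.isUnit.map detMonoidHom
  have hconj : S *ᵥ (M *ᵥ x) = (S * M * S⁻¹) *ᵥ (S *ᵥ x) := by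
    rw [mulVec_mulVec, mulVec_mulVec, mul_assoc, mul_assoc, nonsing_inv_mul S hS, mul_one]
  rw [hD.posSemidef.vecBNorm_eq, hD.posSemidef.vecBNorm_eq, vecBSeminorm_apply,
    vecBSeminorm_apply, hconj]
  exact (S * M * S⁻¹).l2_opNorm_mulVec (WithLp.toLp 2 (S *ᵥ x))

lemma Matrix.PosDef.vecBNorm_mulVec_le (hD : D.PosDef) (M : Matrix (Fin n) (Fin n) ℝ)
    (x : Fin n → ℝ) :
    vecBNorm D (M *ᵥ x) ≤ matBNorm D M * vecBNorm D x := by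
  obtain rfl | hx := eq_or_ne x 0
  · simp [vecBNorm]
  have hpos : 0 < vecBNorm D x := Real.sqrt_pos.mpr (by simpa using hD.dotProduct_mulVec_pos hx)
  have hbdd : BddAbove (Set.range fun y : {y : Fin n → ℝ // y ≠ 0} ↦
      vecBNorm D (M *ᵥ y.1) / vecBNorm D y.1) :=
    ⟨_, Set.forall_mem_range.mpr fun y ↦ div_le_of_le_mul₀ (Real.sqrt_nonneg _)
      (norm_nonneg _) (hD.vecBNorm_mulVec_le_opNorm M y.1)⟩
  rw [← div_le_iff₀ hpos]
  exact le_ciSup hbdd ⟨x, hx⟩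

end DNorm

/-- cumulative error of a `ν`-approximate power sequence of a `D`-norm
contraction `H` with `‖H‖_D ≤ (1-ρ)²`, `ρ ∈ (0,1/2]`, `ν ≤ ρ/2`:
`Σ_k ‖x⁽ᵏ⁾ - Hᵏ x⁽⁰⁾‖_D ≤ 4 ρ⁻² ν ‖x⁽⁰⁾‖_D`. -/
theorem approximate_power_sequence_total_error
    {n : ℕ} (D : Matrix (Fin n) (Fin n) ℝ) (hD : D.PosDef)
    (H : Matrix (Fin n) (Fin n) ℝ) (ρ ν : ℝ)
    (hρ : ρ ∈ Set.Ioc (0 : ℝ) (1 / 2)) (hν : 0 < ν)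
    (hH : matBNorm D H ≤ (1 - ρ) ^ 2) (hνρ : ν ≤ ρ / 2)
    (x : ℕ → Fin n → ℝ)
    (hx : ∀ k : ℕ, vecBNorm D (x (k + 1) - H.mulVec (x k)) ≤ ν * vecBNorm D (H.mulVec (x k))) :
    Summable (fun k : ℕ => vecBNorm D (x k - (H ^ k).mulVec (x 0))) ∧
    ∑' k : ℕ, vecBNorm D (x k - (H ^ k).mulVec (x 0)) ≤ 4 * ρ⁻¹ ^ 2 * ν * vecBNorm D (x 0) := by
  obtain ⟨hρ0, hρ2⟩ := hρ
  set q := matBNorm D H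
  have hq : 0 ≤ q := matBNorm_nonneg D H
  have hnorm : vecBNorm D = vecBSeminorm D := funext hD.posSemidef.vecBNorm_eq
  have hpow (k : ℕ) (y : Fin n → ℝ) : (H ^ k) *ᵥ y = (toLin' H ^ k) y := by
    rw [← toLinAlgEquiv'_apply, map_pow]; rfl
  have hf (y : Fin n → ℝ) : vecBSeminorm D (toLin' H y) ≤ q * vecBSeminorm D y := by
    simpa [hnorm] using hD.vecBNorm_mulVec_le H y
  have hseq : IsApproxPowerSeq (vecBSeminorm D) (toLin' H) ν x := fun k ↦ by
    simpa [hnorm] using hx k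
  have ha : (1 + ν) * q ≤ 1 - ρ :=
    calc (1 + ν) * q ≤ (1 + ρ / 2) * (1 - ρ) ^ 2 := by gcongr
      _ ≤ 1 - ρ := by nlinarith [mul_nonneg (mul_nonneg hρ0.le (by linarith : 0 ≤ 1 - ρ)) hρ0.le]
  simp only [hnorm, hpow]
  refine ⟨hseq.summable_error hq hν.le hf (by linarith), ?_⟩
  calc _ ≤ ν * vecBSeminorm D (x 0) * ((1 + ν) * q / (1 - (1 + ν) * q) ^ 2) :=
        hseq.tsum_error_le hq hν.le hf (by linarith)
    _ ≤ ν * vecBSeminorm D (x 0) * (4 / ρ ^ 2) := by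
        refine mul_le_mul_of_nonneg_left (div_le_div₀ (by norm_num) (by linarith) (by positivity) ?_)
          (by positivity)
        gcongr; linarith
    _ = 4 * ρ⁻¹ ^ 2 * ν * vecBSeminorm D (x 0) := by ring
end

section
/- Let A be an invertible symmetric diagonally dominant real n×n matrix (A_{ii} ≥ Σ_{j≠i} |A_{ij}| for all i). Write A = D₁ + A_p + A_n + D₂, where A_p contains exactly the positive off-diagonal entries of A, A_n contains exactly the negative off-diagonal entries of A, D₁ is the diagonal matrix with D₁(i,i) = Σ_{j≠i} |A(i,j)|, and D₂ = A − A_p − A_n − D₁. Define Â = D₁ + A_n − A_p and the 2n×2n block matrix à = [[D₁ + D₂/2 + A_n, −D₂/2 − A_p], [−D₂/2 − A_p, D₁ + D₂/2 + A_n]]. Then Â and à are both graph Laplacian matrices, the multiset of eigenvalues of à is the disjoint union of the multiset of eigenvalues of Â and the multiset of eigenvalues of A, and log det A = ld(Ã) − ld(Â). -/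
open Matrix

/-- A (weighted) graph Laplacian: symmetric, nonpositive off-diagonal entries,
all row sums zero. -/
def IsLaplacian {ι : Type*} [Fintype ι] (M : Matrix ι ι ℝ) : Prop :=
  M.IsSymm ∧ (∀ i j, i ≠ j → M i j ≤ 0) ∧ ∀ i, ∑ j, M i j = 0

/-- Pseudo-log-determinant: the sum of the logarithms of the positive eigenvalues
(roots of the characteristic polynomial, with multiplicity). -/
noncomputable def pld {ι : Type*} [Fintype ι] [DecidableEq ι] (M : Matrix ι ι ℝ) : ℝ :=
  ((M.charpoly.roots.filter (fun r => 0 < r)).map Real.log).sum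

/-!
Conjugating `Ã = [[B, C], [C, B]]` by `[[1, 1], [0, 1]]` makes it block lower triangular with
diagonal blocks `B + C = Â` and `B - C = A`, so `χ_Ã = χ_Â χ_A` and the pseudo-log-determinant,
a sum over the roots of the characteristic polynomial, is additive: `ld Ã = ld Â + ld A`.
By Gershgorin's theorem a symmetric diagonally dominant matrix has nonnegative eigenvalues, so
the invertible `A` is positive definite and `ld A = log det A`.
`Â` is the weighted Laplacian with weights `|A i j|`, and `Ã` is a Laplacian because its
off-diagonal block `-D₂/2 - A_p` is entrywise nonpositive and its row sums are those of `Â`.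
-/

open Polynomial

variable {ι : Type*}

theorem isLaplacian_fromBlocks_self [Fintype ι] {B C : Matrix ι ι ℝ} (hB : B.IsSymm)
    (hC : C.IsSymm) (hB_offDiag : ∀ i j, i ≠ j → B i j ≤ 0)
    (hC_nonpos : ∀ i j, C i j ≤ 0)
    (hsum : ∀ i, ∑ j, (B + C) i j = 0) : IsLaplacian (fromBlocks B C C B) := by
  refine ⟨hB.fromBlocks hC.eq hB, ?_, ?_⟩
  · rintro (i | i) (j | j) hij
    · exact hB_offDiag i j (by rintro rfl; exact hij rfl)
    · exact hC_nonpos i j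
    · exact hC_nonpos i j
    · exact hB_offDiag i j (by rintro rfl; exact hij rfl)
  · rintro (i | i) <;>
      simp only [Fintype.sum_sum_type, fromBlocks_apply₁₁, fromBlocks_apply₁₂,
        fromBlocks_apply₂₁, fromBlocks_apply₂₂, ← Finset.sum_add_distrib]
    · simpa using hsum i
    · simpa [add_comm] using hsum i

section OffDiagonalParts

variable [DecidableEq ι] (A : Matrix ι ι ℝ)

noncomputable def posOffDiag : Matrix ι ι ℝ :=
  fun i j => if i ≠ j ∧ 0 < A i j then A i j else 0

noncomputable def negOffDiag : Matrix ι ι ℝ :=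
  fun i j => if i ≠ j ∧ A i j < 0 then A i j else 0

theorem posOffDiag_nonneg (i j : ι) : 0 ≤ posOffDiag A i j := by
  unfold posOffDiag
  split_ifs with h
  exacts [h.2.le, le_rfl]

theorem negOffDiag_nonpos (i j : ι) : negOffDiag A i j ≤ 0 := by
  unfold negOffDiag
  split_ifs with h
  exacts [h.2.le, le_rfl]

variable {A}

theorem posOffDiag_isSymm (hA : A.IsSymm) : (posOffDiag A).IsSymm :=
  IsSymm.ext fun i j => by simp only [posOffDiag, hA.apply i j, ne_comm]

theorem negOffDiag_isSymm (hA : A.IsSymm) : (negOffDiag A).IsSymm :=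
  IsSymm.ext fun i j => by simp only [negOffDiag, hA.apply i j, ne_comm]

variable (A)

theorem sub_posOffDiag_sub_negOffDiag :
    A - posOffDiag A - negOffDiag A = diagonal (diag A) := by
  ext i j
  rcases eq_or_ne i j with rfl | hij
  · simp [posOffDiag, negOffDiag]
  · rcases lt_trichotomy (A i j) 0 with h | h | h
    · simp [posOffDiag, negOffDiag, hij, h, h.not_gt]
    · simp [posOffDiag, negOffDiag, hij, h]
    · simp [posOffDiag, negOffDiag, hij, h, h.not_gt]

theorem posOffDiag_sub_negOffDiag_apply (i j : ι) :
    (posOffDiag A - negOffDiag A) i j = if i = j then 0 else |A i j| := by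
  rcases eq_or_ne i j with rfl | hij
  · simp [posOffDiag, negOffDiag]
  · rcases lt_trichotomy (A i j) 0 with h | h | h
    · simp [posOffDiag, negOffDiag, hij, h, h.not_gt, abs_of_neg h]
    · simp [posOffDiag, negOffDiag, hij, h]
    · simp [posOffDiag, negOffDiag, hij, h, h.not_gt, abs_of_pos h]

theorem sum_posOffDiag_sub_negOffDiag [Fintype ι] (i : ι) :
    ∑ j, (posOffDiag A - negOffDiag A) i j = ∑ j ∈ Finset.univ.erase i, |A i j| := by
  rw [← Finset.sum_erase _ ((posOffDiag_sub_negOffDiag_apply A i i).trans (if_pos rfl))]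
  exact Finset.sum_congr rfl fun j hj =>
    (posOffDiag_sub_negOffDiag_apply A i j).trans (if_neg (Finset.ne_of_mem_erase hj).symm)

end OffDiagonalParts

variable [Fintype ι] [DecidableEq ι]

theorem Matrix.charpoly_fromBlocks_self {R : Type*} [CommRing R] (B C : Matrix ι ι R) :
    (fromBlocks B C C B).charpoly = (B + C).charpoly * (B - C).charpoly := by
  let P : Matrix (ι ⊕ ι) (ι ⊕ ι) R := fromBlocks 1 1 0 1
  let Q : Matrix (ι ⊕ ι) (ι ⊕ ι) R := fromBlocks 1 (-1) 0 1
  have hconj : P * fromBlocks B C C B * Q = fromBlocks (B + C) 0 C (B - C) := by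
    simp only [P, Q, fromBlocks_multiply]
    congr 1 <;> noncomm_ring
  have hinv : Q * P = 1 := by
    simp [P, Q, fromBlocks_multiply, ← fromBlocks_one]
  rw [← charpoly_fromBlocks_zero₁₂, ← hconj, mul_assoc, charpoly_mul_comm, mul_assoc, hinv,
    mul_one]

theorem pld_eq_add_of_charpoly_eq_mul {κ₁ κ₂ κ₃ : Type*} [Fintype κ₁] [DecidableEq κ₁]
    [Fintype κ₂] [DecidableEq κ₂] [Fintype κ₃] [DecidableEq κ₃] {M : Matrix κ₁ κ₁ ℝ}
    {P : Matrix κ₂ κ₂ ℝ} {Q : Matrix κ₃ κ₃ ℝ} (h : M.charpoly = P.charpoly * Q.charpoly) :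
    pld M = pld P + pld Q := by
  rw [pld, pld, pld, h,
    roots_mul (mul_ne_zero P.charpoly_monic.ne_zero Q.charpoly_monic.ne_zero),
    Multiset.filter_add, Multiset.map_add, Multiset.sum_add]

theorem Matrix.PosDef.pld_eq_log_det {M : Matrix ι ι ℝ} (hM : M.PosDef) :
    pld M = Real.log M.det := by
  have hpos := hM.eigenvalues_pos
  rw [pld, hM.isHermitian.roots_charpoly_eq_eigenvalues,
    hM.isHermitian.det_eq_prod_eigenvalues, Multiset.filter_eq_self.mpr (by simpa using hpos)]
  simp only [RCLike.ofReal_real_eq_id, Function.id_comp, id, Multiset.map_map]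
  rw [Real.log_prod fun i _ => (hpos i).ne']
  rfl

theorem Matrix.IsHermitian.posSemidef_of_sum_abs_le_diag {A : Matrix ι ι ℝ}
    (hA : A.IsHermitian) (hdd : ∀ i, ∑ j ∈ Finset.univ.erase i, |A i j| ≤ A i i) :
    A.PosSemidef := by
  refine hA.posSemidef_iff_eigenvalues_nonneg.mpr fun i => show (0 : ℝ) ≤ _ from ?_
  have hev : Module.End.HasEigenvalue A.toLin' (hA.eigenvalues i) :=
    .of_mem_spectrum (by rw [spectrum_toLin']; exact hA.eigenvalues_mem_spectrum_real i)
  obtain ⟨k, hk⟩ := eigenvalue_mem_ball hev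
  simp only [Metric.mem_closedBall, Real.dist_eq, Real.norm_eq_abs] at hk
  linarith [(abs_le.mp hk).1, hdd k]

theorem isLaplacian_diagonal_sum_sub {W : Matrix ι ι ℝ} (hW : W.IsSymm)
    (hnn : ∀ i j, i ≠ j → 0 ≤ W i j) : IsLaplacian (diagonal (fun i => ∑ j, W i j) - W) := by
  refine ⟨(isSymm_diagonal _).sub hW, fun i j hij => ?_, fun i => ?_⟩
  · simpa [diagonal_apply_ne _ hij] using hnn i j hij
  · simp [Finset.sum_sub_distrib, diagonal_apply]

theorem isLaplacian_diagonal_add_negOffDiag_sub_posOffDiag {A : Matrix ι ι ℝ}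
    (hA : A.IsSymm) :
    IsLaplacian
      (diagonal (fun i => ∑ j ∈ Finset.univ.erase i, |A i j|) + negOffDiag A - posOffDiag A) := by
  have h := isLaplacian_diagonal_sum_sub ((posOffDiag_isSymm hA).sub (negOffDiag_isSymm hA))
    fun i j _ => sub_nonneg.2 ((negOffDiag_nonpos A i j).trans (posOffDiag_nonneg A i j))
  rwa [funext (sum_posOffDiag_sub_negOffDiag A), sub_sub_eq_add_sub] at h

/-- Kelner et al. reduction for log-determinants of invertible SDD matrices:
`Â` and `Ã` are Laplacians, the eigenvalue multiset of `Ã` is the disjoint union of those of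
`Â` and `A` (stated via characteristic polynomials), and `log det A = ld(Ã) - ld(Â)`. -/
theorem kelner_reduction_log_det
    {n : ℕ} (A : Matrix (Fin n) (Fin n) ℝ) (hsymm : A.IsSymm)
    (hdd : ∀ i, ∑ j ∈ Finset.univ.erase i, |A i j| ≤ A i i)
    (hinv : IsUnit A.det)
    (Ap An D1 D2 Ahat : Matrix (Fin n) (Fin n) ℝ)
    (Atil : Matrix (Fin n ⊕ Fin n) (Fin n ⊕ Fin n) ℝ)
    (hAp : Ap = fun i j => if i ≠ j ∧ 0 < A i j then A i j else 0)
    (hAn : An = fun i j => if i ≠ j ∧ A i j < 0 then A i j else 0)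
    (hD1 : D1 = Matrix.diagonal (fun i => ∑ j ∈ Finset.univ.erase i, |A i j|))
    (hD2 : D2 = A - Ap - An - D1)
    (hAhat : Ahat = D1 + An - Ap)
    (hAtil : Atil = Matrix.fromBlocks
      (D1 + (1 / 2 : ℝ) • D2 + An) (-(1 / 2 : ℝ) • D2 - Ap)
      (-(1 / 2 : ℝ) • D2 - Ap) (D1 + (1 / 2 : ℝ) • D2 + An)) :
    IsLaplacian Ahat ∧ IsLaplacian Atil ∧
    Atil.charpoly = Ahat.charpoly * A.charpoly ∧
    Real.log A.det = pld Atil - pld Ahat := by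
  obtain rfl : Ap = posOffDiag A := hAp
  obtain rfl : An = negOffDiag A := hAn
  have hD2_diag : D2 = diagonal fun i => A i i - ∑ j ∈ Finset.univ.erase i, |A i j| := by
    rw [hD2, sub_posOffDiag_sub_negOffDiag, hD1, diagonal_sub]; rfl
  have hAhat_lap : IsLaplacian Ahat := by
    rw [hAhat, hD1]; exact isLaplacian_diagonal_add_negOffDiag_sub_posOffDiag hsymm
  set B := D1 + (1 / 2 : ℝ) • D2 + negOffDiag A with hB
  set C := -(1 / 2 : ℝ) • D2 - posOffDiag A with hC
  have hsum : B + C = Ahat := by rw [hB, hC, hAhat]; module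
  have hdiff : B - C = A := by rw [hB, hC, hD2]; module
  have hcharpoly : Atil.charpoly = Ahat.charpoly * A.charpoly := by
    rw [hAtil, charpoly_fromBlocks_self, hsum, hdiff]
  refine ⟨hAhat_lap, ?_, hcharpoly, ?_⟩
  · have hD1_symm : D1.IsSymm := hD1 ▸ isSymm_diagonal _
    have hD2_symm : D2.IsSymm := hD2_diag ▸ isSymm_diagonal _
    refine hAtil ▸ isLaplacian_fromBlocks_self
      ((hD1_symm.add (hD2_symm.smul _)).add (negOffDiag_isSymm hsymm))
      ((hD2_symm.smul _).sub (posOffDiag_isSymm hsymm)) (fun i j hij => ?_) (fun i j => ?_)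
      (hsum ▸ hAhat_lap.2.2)
    · simp [hB, hD1, hD2_diag, diagonal_apply_ne _ hij, negOffDiag_nonpos]
    · have hD2_nonneg : 0 ≤ D2 i j := by
        rw [hD2_diag, diagonal_apply]; split_ifs <;> linarith [hdd i]
      simp only [hC, Matrix.sub_apply, Matrix.smul_apply, smul_eq_mul]
      linarith [posOffDiag_nonneg A i j]
  · have hA_psd : A.PosSemidef :=
      (isHermitian_iff_isSymm.mpr hsymm).posSemidef_of_sum_abs_le_diag hdd
    have hA : A.PosDef := hA_psd.posDef_iff_det_ne_zero.mpr hinv.ne_zero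
    rw [pld_eq_add_of_charpoly_eq_mul hcharpoly, hA.pld_eq_log_det]
    ring
end

section
/- Let G and H be connected weighted graphs on the same vertex set of size n, with Laplacians L_G and L_H. Then L_G ⪯ st_H(G) · L_H, where st_H(G) = Tr(L_H⁺ L_G) is the generalized stretch of G with respect to H. -/
open Matrix

/-- The four Penrose conditions characterizing the Moore–Penrose pseudoinverse `P` of a real
matrix `A`. -/
def IsMoorePenrose {ι : Type*} [Fintype ι] (A P : Matrix ι ι ℝ) : Prop :=
  A * P * A = A ∧ P * A * P = P ∧ (A * P)ᵀ = A * P ∧ (P * A)ᵀ = P * A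

/-- The Laplacian of a connected weighted graph: symmetric, nonpositive off-diagonal entries,
zero row sums, and kernel spanned by the all-ones vector. -/
def IsConnLaplacian {ι : Type*} [Fintype ι] (M : Matrix ι ι ℝ) : Prop :=
  M.IsSymm ∧ (∀ i j, i ≠ j → M i j ≤ 0) ∧ (∀ i, ∑ j, M i j = 0) ∧
    ∀ x : ι → ℝ, M.mulVec x = 0 ↔ ∃ c : ℝ, x = fun _ => c

/-! Both kernels are the constants, so `L_G = L_H P L_G P L_H` for `P = L_H⁺`. With `R = √P`, the
positive semidefinite matrix `R L_G R` lies below `Tr(R L_G R) • 1 = Tr(P L_G) • 1`; conjugating by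
`R` and then by `L_H` gives `L_G ⪯ Tr(P L_G) • L_H P L_H = Tr(P L_G) • L_H`. -/

open scoped MatrixOrder

variable {ι : Type*} [Fintype ι]

namespace IsMoorePenrose

variable {A P Q : Matrix ι ι ℝ}

lemma transpose (hP : IsMoorePenrose A P) : IsMoorePenrose Aᵀ Pᵀ := by
  obtain ⟨h₁, h₂, h₃, h₄⟩ := hP
  refine ⟨?_, ?_, ?_, ?_⟩
  · rw [← transpose_mul, ← transpose_mul, ← mul_assoc, h₁]
  · rw [← transpose_mul, ← transpose_mul, ← mul_assoc, h₂]
  · rw [← transpose_mul, transpose_transpose, h₄]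
  · rw [← transpose_mul, transpose_transpose, h₃]

lemma unique (hP : IsMoorePenrose A P) (hQ : IsMoorePenrose A Q) : P = Q := by
  obtain ⟨hP₁, hP₂, hP₃, hP₄⟩ := hP
  obtain ⟨hQ₁, hQ₂, hQ₃, hQ₄⟩ := hQ
  have hAP : A * P = A * Q :=
    calc A * P = (A * Q) * (A * P) := by rw [← mul_assoc, hQ₁]
    _ = (A * Q)ᵀ * (A * P)ᵀ := by rw [hQ₃, hP₃]
    _ = (A * P * A * Q)ᵀ := by simp only [transpose_mul, mul_assoc]
    _ = A * Q := by rw [hP₁, hQ₃]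
  have hPA : P * A = Q * A :=
    calc P * A = (P * A) * (Q * A) := by rw [mul_assoc P A, ← mul_assoc A Q A, hQ₁]
    _ = (P * A)ᵀ * (Q * A)ᵀ := by rw [hP₄, hQ₄]
    _ = (Q * A * P * A)ᵀ := by simp only [transpose_mul, mul_assoc]
    _ = Q * A := by rw [mul_assoc, mul_assoc, ← mul_assoc A P A, hP₁, hQ₄]
  calc P = P * A * P := hP₂.symm
  _ = P * A * Q := by rw [mul_assoc, hAP, ← mul_assoc]
  _ = Q := by rw [hPA, hQ₂]

lemma transpose_eq (hA : Aᵀ = A) (hP : IsMoorePenrose A P) : Pᵀ = P :=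
  (hA ▸ hP.transpose).unique hP

lemma posSemidef (hA : A.PosSemidef) (hP : IsMoorePenrose A P) : P.PosSemidef := by
  have hPt : Pᵀ = P := hP.transpose_eq (by simpa using hA.isHermitian.eq)
  simpa [conjTranspose_eq_transpose_of_trivial, hPt, hP.2.1] using
    hA.conjTranspose_mul_mul_same P

lemma mul_mul_eq_of_ker_le {B : Matrix ι ι ℝ} (hP : IsMoorePenrose B P)
    (hker : ∀ x, B *ᵥ x = 0 → A *ᵥ x = 0) : A * (P * B) = A := by
  refine ext_iff_mulVec.mpr fun x => ?_
  have hB : B *ᵥ ((P * B) *ᵥ x - x) = 0 := by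
    rw [mulVec_sub, mulVec_mulVec, ← mul_assoc, hP.1, sub_self]
  rw [← mulVec_mulVec, ← sub_eq_zero, ← mulVec_sub, hker _ hB]

end IsMoorePenrose

namespace Matrix

lemma PosSemidef.le_trace_smul_one [DecidableEq ι] {M : Matrix ι ι ℝ} (hM : M.PosSemidef) :
    M ≤ M.trace • 1 := by
  rw [← Algebra.algebraMap_eq_smul_one]
  refine le_algebraMap_of_spectrum_le fun x hx => ?_
  obtain ⟨i, rfl⟩ : x ∈ Set.range hM.isHermitian.eigenvalues := by
    rwa [← hM.isHermitian.spectrum_real_eq_range_eigenvalues]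
  rw [hM.isHermitian.trace_eq_sum_eigenvalues]
  simpa using Finset.single_le_sum (fun j _ => hM.eigenvalues_nonneg j) (Finset.mem_univ i)

lemma PosSemidef.mul_mul_le_trace_mul_smul [DecidableEq ι] {A P : Matrix ι ι ℝ}
    (hA : A.PosSemidef) (hP : P.PosSemidef) : P * A * P ≤ (P * A).trace • P := by
  set R := CFC.sqrt P
  have hR : 0 ≤ R := CFC.sqrt_nonneg P
  have hRR : R * R = P := CFC.sqrt_mul_sqrt_self P hP.nonneg
  have hRAR : (R * A * R).PosSemidef :=
    nonneg_iff_posSemidef.mp (conjugate_nonneg_of_nonneg hA.nonneg hR)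
  have htrace : (R * A * R).trace = (P * A).trace := by
    rw [trace_mul_comm, ← mul_assoc, hRR]
  have h := conjugate_le_conjugate_of_nonneg hRAR.le_trace_smul_one hR
  rwa [htrace, mul_smul_comm, smul_mul_assoc, mul_one, hRR,
    show R * (R * A * R) * R = P * A * P by simp only [← hRR, mul_assoc]] at h

theorem PosSemidef.le_trace_mul_smul_of_ker_le [DecidableEq ι] {A B P : Matrix ι ι ℝ}
    (hA : A.PosSemidef) (hB : B.PosSemidef) (hP : IsMoorePenrose B P)
    (hker : ∀ x, B *ᵥ x = 0 → A *ᵥ x = 0) : A ≤ (P * A).trace • B := by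
  have hAt : Aᵀ = A := by simpa using hA.isHermitian.eq
  have hBt : Bᵀ = B := by simpa using hB.isHermitian.eq
  have hPt : Pᵀ = P := hP.transpose_eq hBt
  have hright : A * (P * B) = A := hP.mul_mul_eq_of_ker_le hker
  have hleft : B * P * A = A := by
    simpa [transpose_mul, hAt, hBt, hPt, mul_assoc] using congrArg Matrix.transpose hright
  calc A = B * (P * A * P) * B := by
        rw [← mul_assoc, ← mul_assoc, hleft, mul_assoc, hright]
  _ ≤ B * ((P * A).trace • P) * B := conjugate_le_conjugate_of_nonneg
        (hA.mul_mul_le_trace_mul_smul (hP.posSemidef hB)) hB.nonneg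
  _ = (P * A).trace • B := by rw [mul_smul_comm, smul_mul_assoc, hP.1]

lemma IsSymm.sum_sum_mul_sub_sq {L : Matrix ι ι ℝ} (hsym : L.IsSymm)
    (hrow : ∀ i, ∑ j, L i j = 0) (x : ι → ℝ) :
    ∑ i, ∑ j, L i j * (x i - x j) ^ 2 = -2 * (x ⬝ᵥ L *ᵥ x) := by
  have hcol : ∀ j, ∑ i, L i j = 0 := fun j => by simpa [hsym.apply] using hrow j
  have hexpand : ∀ i j, L i j * (x i - x j) ^ 2 =
      x i ^ 2 * L i j + L i j * x j ^ 2 - 2 * (x i * (L i j * x j)) := fun i j => by ring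
  simp only [hexpand, Finset.sum_sub_distrib, Finset.sum_add_distrib, ← Finset.mul_sum, hrow,
    mul_zero, zero_add]
  rw [Finset.sum_comm]
  simp only [← Finset.sum_mul, hcol, zero_mul, Finset.sum_const_zero, zero_sub]
  simp [dotProduct, mulVec, Finset.mul_sum]

lemma IsSymm.posSemidef_of_offDiag_nonpos_of_sum_eq_zero {L : Matrix ι ι ℝ} (hsym : L.IsSymm)
    (hoff : ∀ i j, i ≠ j → L i j ≤ 0) (hrow : ∀ i, ∑ j, L i j = 0) : L.PosSemidef := by
  refine .of_dotProduct_mulVec_nonneg (by simpa [IsHermitian] using hsym.eq) fun x => ?_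
  have hsum : 0 ≤ ∑ i, ∑ j, -L i j * (x i - x j) ^ 2 :=
    Finset.sum_nonneg fun i _ => Finset.sum_nonneg fun j _ => by
      rcases eq_or_ne i j with rfl | hij
      · simp
      · exact mul_nonneg (neg_nonneg.mpr (hoff i j hij)) (sq_nonneg _)
  simp only [neg_mul, Finset.sum_neg_distrib, hsym.sum_sum_mul_sub_sq hrow] at hsum
  simpa using hsum

end Matrix

lemma IsConnLaplacian.posSemidef {L : Matrix ι ι ℝ} (hL : IsConnLaplacian L) : L.PosSemidef :=
  hL.1.posSemidef_of_offDiag_nonpos_of_sum_eq_zero hL.2.1 hL.2.2.1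

lemma IsConnLaplacian.mulVec_eq_zero_of_mulVec_eq_zero {L M : Matrix ι ι ℝ}
    (hL : IsConnLaplacian L) (hM : IsConnLaplacian M) {x : ι → ℝ} (hx : M *ᵥ x = 0) : L *ᵥ x = 0 :=
  (hL.2.2.2 x).mpr ((hM.2.2.2 x).mp hx)

theorem stretch_matrix_inequality_general
    {n : ℕ} (LG LH PH : Matrix (Fin n) (Fin n) ℝ)
    (hG : IsConnLaplacian LG) (hH : IsConnLaplacian LH)
    (hPH : IsMoorePenrose LH PH) :
    ((PH * LG).trace • LH - LG).PosSemidef :=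
  le_iff.mp <| hG.posSemidef.le_trace_mul_smul_of_ker_le hH.posSemidef hPH
    fun _ => hG.mulVec_eq_zero_of_mulVec_eq_zero hH

/-- the stretch inequality `L_G ⪯ st_H(G) · L_H` with
`st_H(G) = Tr(L_H⁺ L_G)`. -/
theorem stretch_matrix_inequality
    {n : ℕ} (hn : 0 < n) (LG LH PH : Matrix (Fin n) (Fin n) ℝ)
    (hG : IsConnLaplacian LG) (hH : IsConnLaplacian LH)
    (hPH : IsMoorePenrose LH PH) :
    ((PH * LG).trace • LH - LG).PosSemidef :=
  stretch_matrix_inequality_general LG LH PH hG hH hPH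
end

section
/- Let A be a real symmetric positive semidefinite n×n matrix and let x ∈ ℝⁿ lie in the range (column space) of A. Then x·xᵀ ⪯ (xᵀ A⁺ x) · A, where A⁺ is the Moore–Penrose pseudoinverse of A. -/
/-!
Write `x = A y`. The generalized-inverse identity `A P A = A` turns the coefficient `xᵀ P x`
into `yᵀ A y`, and then `zᵀ ((yᵀ A y) A - x xᵀ) z = (yᵀ A y)(zᵀ A z) - (yᵀ A z)²` is
nonnegative by the Cauchy–Schwarz inequality for the semi-inner product `⟪u, v⟫ = uᵀ A v`.
-/

open Matrix

namespace Matrix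

variable {ι R : Type*} [Fintype ι]

theorem IsSymm.mulVec_dotProduct_comm [CommSemiring R] {A : Matrix ι ι R} (hA : A.IsSymm)
    (y z : ι → R) : A *ᵥ y ⬝ᵥ z = y ⬝ᵥ A *ᵥ z := by
  rw [← vecMul_transpose, hA.eq, dotProduct_mulVec]

theorem IsSymm.mulVec_dotProduct_mulVec_mulVec_of_mul_mul_eq [CommSemiring R]
    {A P : Matrix ι ι R} (hA : A.IsSymm) (hAPA : A * P * A = A) (y : ι → R) :
    A *ᵥ y ⬝ᵥ P *ᵥ (A *ᵥ y) = y ⬝ᵥ A *ᵥ y := by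
  rw [hA.mulVec_dotProduct_comm, mulVec_mulVec, mulVec_mulVec, hAPA]

theorem PosSemidef.dotProduct_mulVec_sq_le {A : Matrix ι ι ℝ} (hA : A.PosSemidef)
    (y z : ι → ℝ) : (y ⬝ᵥ A *ᵥ z) ^ 2 ≤ (y ⬝ᵥ A *ᵥ y) * (z ⬝ᵥ A *ᵥ z) := by
  let := A.toSeminormedAddCommGroup hA
  let := A.toInnerProductSpace hA
  have hinner (u v : ι → ℝ) : inner ℝ u v = u ⬝ᵥ A *ᵥ v :=
    (dotProduct_comm _ _).trans (by rw [star_trivial])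
  simpa only [hinner, sq] using real_inner_mul_inner_self_le y z

theorem PosSemidef.smul_sub_vecMulVec_mulVec {A : Matrix ι ι ℝ} (hA : A.PosSemidef)
    (y : ι → ℝ) : ((y ⬝ᵥ A *ᵥ y) • A - vecMulVec (A *ᵥ y) (A *ᵥ y)).PosSemidef := by
  have hx : (vecMulVec (A *ᵥ y) (A *ᵥ y)).IsHermitian :=
    (posSemidef_vecMulVec_self_star (A *ᵥ y)).isHermitian
  refine posSemidef_iff_dotProduct_mulVec.mpr
    ⟨(hA.isHermitian.smul (.all _)).sub hx, fun z => ?_⟩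
  have hyz := (isHermitian_iff_isSymm.mp hA.isHermitian).mulVec_dotProduct_comm y z
  simp only [star_trivial, sub_mulVec, smul_mulVec, vecMulVec_mulVec, dotProduct_sub,
    dotProduct_smul]
  rw [op_smul_eq_mul, smul_eq_mul, dotProduct_comm z (A *ᵥ y), hyz, sub_nonneg, ← sq]
  exact hA.dotProduct_mulVec_sq_le y z

end Matrix

/-- for a positive semidefinite `A` and `x` in the range of `A`,
`x xᵀ ⪯ (xᵀ A⁺ x) A`. -/
theorem rank_one_pseudo_inverse_inequality
    {n : ℕ} (A P : Matrix (Fin n) (Fin n) ℝ) (hA : A.PosSemidef)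
    (hP : IsMoorePenrose A P)
    (x : Fin n → ℝ) (hx : ∃ y : Fin n → ℝ, x = A.mulVec y) :
    ((x ⬝ᵥ P.mulVec x) • A - Matrix.vecMulVec x x).PosSemidef := by
  obtain ⟨y, rfl⟩ := hx
  rw [(isHermitian_iff_isSymm.mp hA.isHermitian).mulVec_dotProduct_mulVec_mulVec_of_mul_mul_eq
    hP.1 y]
  exact hA.smul_sub_vecMulVec_mulVec y
end

section
/- Let A be a nonzero real symmetric positive semidefinite n×n matrix with exactly p positive eigenvalues (counted with multiplicity). Then the pseudo-log-determinant satisfies ld(A) ≤ p · log( Tr(A)/p ). -/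
open Matrix

open Polynomial

lemma charpoly_conj_aux {m : Type*} [Fintype m] [DecidableEq m] (U D : Matrix m m ℝ)
    (h1 : U * star U = 1) :
    (U * D * star U).charpoly = D.charpoly := by
  unfold Matrix.charpoly
  have key : charmatrix (U * D * star U)
      = (C : ℝ →+* ℝ[X]).mapMatrix U * charmatrix D * (C : ℝ →+* ℝ[X]).mapMatrix (star U) := by
    rw [charmatrix, charmatrix, mul_sub, sub_mul]
    congr 1
    · rw [mul_assoc, (scalar_commute (X : ℝ[X]) (Commute.all X) _).eq, ← mul_assoc,
        ← _root_.map_mul, h1, _root_.map_one, one_mul]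
    · rw [← _root_.map_mul, ← _root_.map_mul]
  have huv : ((C : ℝ →+* ℝ[X]).mapMatrix U).det * ((C : ℝ →+* ℝ[X]).mapMatrix (star U)).det
      = 1 := by
    rw [← det_mul, ← _root_.map_mul, h1, _root_.map_one, det_one]
  rw [key, det_mul, det_mul, mul_right_comm, huv, one_mul]

lemma charpoly_diag_aux {m : Type*} [Fintype m] [DecidableEq m] (d : m → ℝ) :
    (Matrix.diagonal d).charpoly = ∏ i, (X - C (d i)) := by
  unfold Matrix.charpoly
  have : charmatrix (Matrix.diagonal d) = Matrix.diagonal (fun i => X - C (d i)) := by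
    rw [charmatrix, scalar_apply, RingHom.mapMatrix_apply, diagonal_map (by simp), diagonal_sub]
  rw [this, det_diagonal]


/-- Jensen inequality for the pseudo-log-determinant: if the nonzero positive
semidefinite matrix `A` has exactly `p` positive eigenvalues (with multiplicity), then
`ld(A) ≤ p log(Tr(A)/p)`. -/
theorem pld_jensen_inequality
    {n p : ℕ} (A : Matrix (Fin n) (Fin n) ℝ) (hA : A.PosSemidef) (hA0 : A ≠ 0)
    (hp : (A.charpoly.roots.filter (fun r => 0 < r)).card = p) :
    pld A ≤ (p : ℝ) * Real.log (A.trace / p) := by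
  classical
  have hH := hA.1
  set μ := hH.eigenvalues with hμ
  set U := (hH.eigenvectorUnitary : Matrix (Fin n) (Fin n) ℝ) with hU
  have hUmem := hH.eigenvectorUnitary.2
  have h1 : U * star U = 1 := (Matrix.mem_unitaryGroup_iff).mp hUmem
  have hspec : A = U * Matrix.diagonal μ * star U := by
    have := hH.spectral_theorem
    simpa using this
  -- roots of charpoly = eigenvalues
  have hcp : A.charpoly = ∏ i, (X - C (μ i)) := by
    rw [hspec, charpoly_conj_aux _ _ h1, charpoly_diag_aux]
  have hroots : A.charpoly.roots = Finset.univ.val.map μ := by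
    rw [hcp]
    have : (∏ i, (X - C (μ i))) = ((Finset.univ.val.map μ).map fun a => X - C a).prod := by
      rw [Multiset.map_map]; rfl
    rw [this, roots_multiset_prod_X_sub_C]
  set t : Finset (Fin n) := Finset.univ.filter (fun i => 0 < μ i) with ht
  have hfilt : A.charpoly.roots.filter (fun r => 0 < r) = t.val.map μ := by
    rw [hroots, Multiset.filter_map, ht, Finset.filter_val]
    rfl
  have hcard : t.card = p := by
    rw [← hp, hfilt, Multiset.card_map]; rfl
  -- eigenvalues nonneg
  have hnn : ∀ i, 0 ≤ μ i := fun i => hA.eigenvalues_nonneg i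
  -- t nonempty
  have htne : t.Nonempty := by
    by_contra h
    rw [Finset.not_nonempty_iff_eq_empty] at h
    apply hA0
    have hzero : μ = 0 := by
      funext i
      have : ¬ 0 < μ i := by
        intro hi
        have : i ∈ t := by simp [ht, hi]
        simp [h] at this
      exact le_antisymm (not_lt.mp this) (hnn i)
    rw [hspec, hzero, show Matrix.diagonal (0 : Fin n → ℝ) = 0 from Matrix.diagonal_zero,
      Matrix.mul_zero, Matrix.zero_mul]
  have hppos : 0 < p := by rw [← hcard]; exact Finset.card_pos.mpr htne
  have hp0 : (p : ℝ) ≠ 0 := Nat.cast_ne_zero.mpr hppos.ne'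
  -- trace
  have htr : A.trace = ∑ i ∈ t, μ i := by
    rw [hspec, trace_mul_comm, ← mul_assoc]
    have h2 : star U * U = 1 := (Matrix.mem_unitaryGroup_iff').mp hUmem
    rw [h2, one_mul, trace_diagonal]
    refine (Finset.sum_subset (Finset.subset_univ t) ?_).symm
    intro i _ hit
    have : ¬ 0 < μ i := by simpa [ht] using hit
    exact le_antisymm (not_lt.mp this) (hnn i)
  -- pld
  have hpld : pld A = ∑ i ∈ t, Real.log (μ i) := by
    rw [pld, hfilt, Multiset.map_map]
    rfl
  -- Jensen
  have hjen : ∑ i ∈ t, (1 / (p : ℝ)) • Real.log (μ i)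
      ≤ Real.log (∑ i ∈ t, (1 / (p : ℝ)) • μ i) := by
    apply (strictConcaveOn_log_Ioi.concaveOn).le_map_sum
    · intro i _; positivity
    · rw [Finset.sum_const, hcard, nsmul_eq_mul]; field_simp
    · intro i hi; exact Finset.mem_filter.mp hi |>.2
  have hsum : ∑ i ∈ t, (1 / (p : ℝ)) • μ i = A.trace / p := by
    simp only [smul_eq_mul, htr]
    rw [← Finset.mul_sum]; ring
  rw [hsum] at hjen
  have : (1 / (p : ℝ)) * ∑ i ∈ t, Real.log (μ i) ≤ Real.log (A.trace / p) := by
    rw [Finset.mul_sum]; simpa [smul_eq_mul] using hjen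
  have := mul_le_mul_of_nonneg_left this (le_of_lt (by positivity : (0:ℝ) < (p:ℝ)))
  rw [hpld]
  calc ∑ i ∈ t, Real.log (μ i) = (p : ℝ) * ((1 / (p : ℝ)) * ∑ i ∈ t, Real.log (μ i)) := by
        field_simp
    _ ≤ (p : ℝ) * Real.log (A.trace / p) := this
end
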